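/- Under the assumptions that Q is symmetric positive definite, J(z)ᵀ = -J(z) for all z, and z ↦ J(z)Q is Lipschitz with constant L on B(y₀; 2‖y₀‖_Q) w.r.t. the Q-norm, if h < 2/(L‖y₀‖_Q) then the fixed-point iteration x_{k+1} = Φ_h(x_k) converges to the unique fixed point of Φ_h in B(y₀; 2‖y₀‖_Q) for every starting vector x₀ ∈ ℝⁿ. -/

import Mathlib

open Matrix

/-- The `Q`-norm of a vector, `‖x‖_Q = √(xᵀ Q x)`. -/
noncomputable def qnorm {n : ℕ} (Q : Matrix (Fin n) (Fin n) ℝ) (x : Fin n → ℝ) : ℝ :=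
  Real.sqrt (x ⬝ᵥ Q.mulVec x)

/-- The operator norm on `ℝ^{n×n}` induced by the `Q`-norm. -/
noncomputable def qOpNorm {n : ℕ} (Q M : Matrix (Fin n) (Fin n) ℝ) : ℝ :=
  sInf {c : ℝ | 0 ≤ c ∧ ∀ x : Fin n → ℝ, qnorm Q (M.mulVec x) ≤ c * qnorm Q x}

/-- The Cayley transform `C(A) = (I - A)⁻¹ (I + A)`. -/
noncomputable def cayley {n : ℕ} (A : Matrix (Fin n) (Fin n) ℝ) : Matrix (Fin n) (Fin n) ℝ :=
  (1 - A)⁻¹ * (1 + A)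

/-- The midpoint-rule fixed point map `Φ_h(x) = C((h/2) J((y₀+x)/2) Q) y₀`. -/
noncomputable def Phi {n : ℕ} (Q : Matrix (Fin n) (Fin n) ℝ)
    (J : (Fin n → ℝ) → Matrix (Fin n) (Fin n) ℝ) (y₀ : Fin n → ℝ) (h : ℝ)
    (x : Fin n → ℝ) : Fin n → ℝ :=
  (cayley ((h / 2) • (J ((1 / 2 : ℝ) • (y₀ + x)) * Q))).mulVec y₀

/-!
Since `Jᵀ = -J`, each `A = (h/2) J(z) Q` is skew-adjoint for the inner product `⟨x, y⟩_Q = xᵀQy`.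
Hence `(I - A)⁻¹` does not increase `‖·‖_Q` and the Cayley transform `C(A)` is a `Q`-isometry,
so `Φ_h` maps all of `ℝⁿ` into the sphere `‖x‖_Q = ‖y₀‖_Q`, which lies in `B(y₀; 2‖y₀‖_Q)`.
The identity `C(A) - C(B) = 2 (I - A)⁻¹ (A - B) (I - B)⁻¹` and the Lipschitz bound on
`z ↦ J(z) Q` make `Φ_h` a contraction on that ball with factor `h L ‖y₀‖_Q / 2`. Banach's theorem
on the complete ball gives the unique fixed point, and the iteration started anywhere converges
to it because its first step already lands in the ball.
-/

open Filter Topology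

theorem exists_fixedPoint_tendsto_of_range_subset {α : Type*} [MetricSpace α] [Nonempty α]
    {f : α → α} {s : Set α} (hs : IsComplete s) (hfs : ∀ x, f x ∈ s) {K : ℝ} (hK : K < 1)
    (hf : ∀ x ∈ s, ∀ y ∈ s, dist (f x) (f y) ≤ K * dist x y) :
    ∃ y, (y ∈ s ∧ f y = y) ∧ (∀ y' ∈ s, f y' = y' → y' = y) ∧
      ∀ x, Tendsto (fun k => f^[k] x) atTop (𝓝 y) := by
  have hmaps : Set.MapsTo f s s := fun x _ => hfs x
  have hcontr : ContractingWith K.toNNReal (hmaps.restrict f s s) := by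
    refine ⟨Real.toNNReal_lt_one.mpr hK, LipschitzWith.of_dist_le_mul fun x y => ?_⟩
    exact (hf x x.2 y y.2).trans
      (mul_le_mul_of_nonneg_right (Real.le_coe_toNNReal K) dist_nonneg)
  have hlim : ∀ x, ∃ y ∈ s, f y = y ∧ Tendsto (fun k => f^[k] x) atTop (𝓝 y) := fun x => by
    obtain ⟨y, hys, hfix, hlim, -⟩ :=
      ContractingWith.exists_fixedPoint' hs hmaps hcontr (hfs x) (edist_ne_top _ _)
    refine ⟨y, hys, hfix, (tendsto_add_atTop_iff_nat 1).mp ?_⟩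
    simpa only [Function.iterate_succ_apply] using hlim
  have huniq : ∀ y ∈ s, ∀ y' ∈ s, f y = y → f y' = y' → y' = y := by
    intro y hy y' hy' hfy hfy'
    have := hf y' hy' y hy
    rw [hfy, hfy'] at this
    exact dist_le_zero.mp (by nlinarith [dist_nonneg (x := y') (y := y)])
  obtain ⟨y, hys, hfix, -⟩ := hlim (Classical.arbitrary α)
  refine ⟨y, ⟨hys, hfix⟩, fun y' hy' hfy' => huniq y hys y' hy' hfix hfy', fun x => ?_⟩
  obtain ⟨y', hy's, hfix', hlim'⟩ := hlim x
  rwa [huniq y hys y' hy's hfix hfix'] at hlim'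

/-- `ℝⁿ` with the norm `‖·‖_Q`; a type synonym, so that the `Q`-norm does not clash with the
sup norm of `Fin n → ℝ`. -/
def QVec {n : ℕ} (Q : Matrix (Fin n) (Fin n) ℝ) (_hQ : Q.PosDef) : Type := Fin n → ℝ

namespace QVec

variable {n : ℕ} {Q : Matrix (Fin n) (Fin n) ℝ} (hQ : Q.PosDef)

noncomputable instance : NormedAddCommGroup (QVec Q hQ) := Q.toNormedAddCommGroup hQ

noncomputable instance : InnerProductSpace ℝ (QVec Q hQ) :=
  Q.toInnerProductSpace hQ.posSemidef

def equiv : (Fin n → ℝ) ≃ₗ[ℝ] QVec Q hQ := LinearEquiv.refl ℝ (Fin n → ℝ)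

instance : FiniteDimensional ℝ (QVec Q hQ) := (equiv hQ).finiteDimensional

theorem inner_equiv (x y : Fin n → ℝ) : inner ℝ (equiv hQ x) (equiv hQ y) = x ⬝ᵥ Q *ᵥ y :=
  dotProduct_comm _ _

theorem norm_equiv (x : Fin n → ℝ) : ‖equiv hQ x‖ = qnorm Q x := by
  rw [norm_eq_sqrt_real_inner, inner_equiv, qnorm]

theorem dist_equiv (x y : Fin n → ℝ) : dist (equiv hQ x) (equiv hQ y) = qnorm Q (x - y) := by
  rw [dist_eq_norm, ← map_sub, norm_equiv]

noncomputable def mulVecL (M : Matrix (Fin n) (Fin n) ℝ) : QVec Q hQ →L[ℝ] QVec Q hQ :=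
  LinearMap.toContinuousLinearMap ((equiv hQ).conj M.mulVecLin)

theorem mulVecL_equiv (M : Matrix (Fin n) (Fin n) ℝ) (x : Fin n → ℝ) :
    mulVecL hQ M (equiv hQ x) = equiv hQ (M *ᵥ x) :=
  rfl

theorem norm_mulVecL (M : Matrix (Fin n) (Fin n) ℝ) : ‖mulVecL hQ M‖ = qOpNorm Q M := by
  rw [ContinuousLinearMap.norm_def, qOpNorm]
  congr! 4 with c x
  simp only [← norm_equiv hQ, ← mulVecL_equiv]
  exact (equiv hQ).forall_congr_right.symm

end QVec

section QNorm

variable {n : ℕ} {Q : Matrix (Fin n) (Fin n) ℝ}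

variable (Q) in
theorem qnorm_nonneg (x : Fin n → ℝ) : 0 ≤ qnorm Q x :=
  Real.sqrt_nonneg _

theorem qnorm_smul (hQ : Q.PosDef) (c : ℝ) (x : Fin n → ℝ) :
    qnorm Q (c • x) = |c| * qnorm Q x := by
  rw [← QVec.norm_equiv hQ, map_smul, norm_smul, Real.norm_eq_abs, QVec.norm_equiv]

theorem qnorm_sub_le (hQ : Q.PosDef) (x y : Fin n → ℝ) :
    qnorm Q (x - y) ≤ qnorm Q x + qnorm Q y := by
  simpa only [← QVec.norm_equiv hQ, map_sub] using norm_sub_le _ _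

theorem qnorm_mulVec_le (hQ : Q.PosDef) (M : Matrix (Fin n) (Fin n) ℝ) (x : Fin n → ℝ) :
    qnorm Q (M *ᵥ x) ≤ qOpNorm Q M * qnorm Q x := by
  simpa only [← QVec.norm_equiv hQ, ← QVec.norm_mulVecL hQ, QVec.mulVecL_equiv] using
    (QVec.mulVecL hQ M).le_opNorm (QVec.equiv hQ x)

theorem qOpNorm_smul (hQ : Q.PosDef) (c : ℝ) (M : Matrix (Fin n) (Fin n) ℝ) :
    qOpNorm Q (c • M) = |c| * qOpNorm Q M := by
  rw [← QVec.norm_mulVecL hQ, ← QVec.norm_mulVecL hQ, ← Real.norm_eq_abs, ← norm_smul]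
  congr 1
  ext x
  simp [QVec.mulVecL]

end QNorm

theorem exists_fixedPoint_tendsto_of_qnorm_contraction {n : ℕ} {Q : Matrix (Fin n) (Fin n) ℝ}
    (hQ : Q.PosDef) {f : (Fin n → ℝ) → Fin n → ℝ} {c : Fin n → ℝ} {r K : ℝ} (hK : K < 1)
    (hfc : ∀ x, qnorm Q (f x - c) ≤ r)
    (hf : ∀ x y, qnorm Q (x - c) ≤ r → qnorm Q (y - c) ≤ r →
      qnorm Q (f x - f y) ≤ K * qnorm Q (x - y)) :
    ∃ y, (qnorm Q (y - c) ≤ r ∧ f y = y) ∧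
      (∀ y', qnorm Q (y' - c) ≤ r → f y' = y' → y' = y) ∧
      ∀ x, Tendsto (fun k => f^[k] x) atTop (𝓝 y) := by
  let e := (QVec.equiv hQ).toContinuousLinearEquiv
  have he : ∀ x y, dist (e x) (e y) = qnorm Q (x - y) := QVec.dist_equiv hQ
  have hmem : ∀ x, e x ∈ Metric.closedBall (e c) r ↔ qnorm Q (x - c) ≤ r := fun x => by
    rw [Metric.mem_closedBall, he]
  let g := e ∘ f ∘ e.symm
  have hconj : Function.Semiconj e f g := fun x => by simp [g]
  have hg : ∀ x, g (e x) = e x ↔ f x = x := fun x => by simp [g]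
  obtain ⟨y, ⟨hys, hfix⟩, huniq, hlim⟩ := exists_fixedPoint_tendsto_of_range_subset (f := g)
    Metric.isClosed_closedBall.isComplete (fun x => (hmem _).mpr (hfc _)) hK
    fun x hx y hy => by
      obtain ⟨x, rfl⟩ := e.surjective x
      obtain ⟨y, rfl⟩ := e.surjective y
      simpa only [← hconj.eq, he] using hf x y ((hmem x).mp hx) ((hmem y).mp hy)
  obtain ⟨y, rfl⟩ := e.surjective y
  refine ⟨y, ⟨(hmem y).mp hys, (hg y).mp hfix⟩, fun y' hy' hfy' =>
    e.injective (huniq _ ((hmem y').mpr hy') ((hg y').mpr hfy')), fun x => ?_⟩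
  have := (e.symm.continuous.tendsto _).comp (hlim (e x))
  simpa only [Function.comp_def, ← (hconj.iterate_right _).eq, e.symm_apply_apply] using this

section Cayley

variable {n : ℕ} {Q A B : Matrix (Fin n) (Fin n) ℝ}

theorem dotProduct_mulVec_self_eq_zero_of_transpose_eq_neg {M : Matrix (Fin n) (Fin n) ℝ}
    (hM : Mᵀ = -M) (v : Fin n → ℝ) : v ⬝ᵥ M *ᵥ v = 0 := by
  have h : v ⬝ᵥ Mᵀ *ᵥ v = v ⬝ᵥ M *ᵥ v := by
    rw [dotProduct_mulVec, vecMul_transpose, dotProduct_comm]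
  rw [hM, neg_mulVec, dotProduct_neg] at h
  linarith

theorem Matrix.PosDef.isSymm (hQ : Q.PosDef) : Q.IsSymm :=
  isHermitian_iff_isSymm.mp hQ.isHermitian

theorem Matrix.IsSymm.isSkewAdjoint_smul_mul (hQ : Q.IsSymm) {M : Matrix (Fin n) (Fin n) ℝ}
    (hM : Mᵀ = -M) (c : ℝ) : Q.IsSkewAdjoint (c • (M * Q)) := by
  change (c • (M * Q))ᵀ * Q = Q * -(c • (M * Q))
  rw [transpose_smul, transpose_mul, hQ.eq, hM]
  simp only [smul_mul_assoc, mul_smul_comm, neg_mul, mul_neg, smul_neg, mul_assoc]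

theorem Matrix.IsSkewAdjoint.dotProduct_mulVec_mulVec_self (hQ : Q.IsSymm)
    (hA : Q.IsSkewAdjoint A) (v : Fin n → ℝ) : v ⬝ᵥ Q *ᵥ (A *ᵥ v) = 0 := by
  rw [mulVec_mulVec]
  refine dotProduct_mulVec_self_eq_zero_of_transpose_eq_neg ?_ v
  rw [transpose_mul, hQ.eq, show Aᵀ * Q = Q * -A from hA, mul_neg]

theorem Matrix.IsSkewAdjoint.isUnit_det_one_sub (hQ : Q.PosDef) (hA : Q.IsSkewAdjoint A) :
    IsUnit (1 - A).det := by
  rw [isUnit_iff_ne_zero]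
  intro hdet
  obtain ⟨v, hv0, hv⟩ := exists_mulVec_eq_zero_iff.mpr hdet
  rw [sub_mulVec, one_mulVec, sub_eq_zero] at hv
  have hpos : 0 < v ⬝ᵥ Q *ᵥ v := by simpa using hQ.dotProduct_mulVec_pos hv0
  nth_rewrite 2 [hv] at hpos
  exact hpos.ne' (hA.dotProduct_mulVec_mulVec_self hQ.isSymm v)

theorem Matrix.IsSkewAdjoint.qnorm_le_qnorm_sub_mulVec (hQ : Q.PosDef) (hA : Q.IsSkewAdjoint A)
    (w : Fin n → ℝ) : qnorm Q w ≤ qnorm Q (w - A *ᵥ w) := by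
  have horth : inner ℝ (QVec.equiv hQ w) (QVec.equiv hQ (A *ᵥ w)) = 0 := by
    rw [QVec.inner_equiv, hA.dotProduct_mulVec_mulVec_self hQ.isSymm]
  have := norm_sub_sq_eq_norm_sq_add_norm_sq_real horth
  rw [← QVec.norm_equiv hQ, ← QVec.norm_equiv hQ, map_sub]
  nlinarith [norm_nonneg (QVec.equiv hQ w),
    norm_nonneg (QVec.equiv hQ w - QVec.equiv hQ (A *ᵥ w))]

theorem Matrix.IsSkewAdjoint.qnorm_inv_one_sub_mulVec_le (hQ : Q.PosDef)
    (hA : Q.IsSkewAdjoint A) (v : Fin n → ℝ) : qnorm Q ((1 - A)⁻¹ *ᵥ v) ≤ qnorm Q v := by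
  have hv : (1 - A) *ᵥ ((1 - A)⁻¹ *ᵥ v) = v := by
    rw [mulVec_mulVec, mul_nonsing_inv _ (hA.isUnit_det_one_sub hQ), one_mulVec]
  rw [sub_mulVec, one_mulVec] at hv
  calc _ ≤ _ := hA.qnorm_le_qnorm_sub_mulVec hQ ((1 - A)⁻¹ *ᵥ v)
    _ = qnorm Q v := by rw [hv]

theorem Matrix.IsSkewAdjoint.qnorm_cayley_mulVec (hQ : Q.PosDef) (hA : Q.IsSkewAdjoint A)
    (y : Fin n → ℝ) : qnorm Q (cayley A *ᵥ y) = qnorm Q y := by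
  set w := cayley A *ᵥ y with hw_def
  have hw : (1 - A) *ᵥ w = (1 + A) *ᵥ y := by
    rw [hw_def, cayley, mulVec_mulVec, ← mul_assoc, mul_nonsing_inv _ (hA.isUnit_det_one_sub hQ),
      one_mul]
  have hsub : w - y = A *ᵥ (w + y) := by
    simp only [sub_mulVec, add_mulVec, one_mulVec] at hw
    rw [mulVec_add]
    linear_combination hw
  rw [← QVec.norm_equiv hQ, ← QVec.norm_equiv hQ, ← real_inner_add_sub_eq_zero_iff, ← map_add,
    ← map_sub, hsub, QVec.inner_equiv, hA.dotProduct_mulVec_mulVec_self hQ.isSymm]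

theorem cayley_eq_smul_inv_sub_one (hA : IsUnit (1 - A).det) :
    cayley A = (2 : ℝ) • (1 - A)⁻¹ - 1 := by
  rw [cayley, show 1 + A = (2 : ℝ) • 1 - (1 - A) by module, mul_sub, mul_smul_comm, mul_one,
    nonsing_inv_mul _ hA]

theorem cayley_sub_cayley (hA : IsUnit (1 - A).det) (hB : IsUnit (1 - B).det) :
    cayley A - cayley B = (1 - A)⁻¹ * ((2 : ℝ) • (A - B)) * (1 - B)⁻¹ := by
  rw [cayley_eq_smul_inv_sub_one hA, cayley_eq_smul_inv_sub_one hB,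
    show A - B = (1 - B) - (1 - A) by abel, mul_smul_comm, smul_mul_assoc, mul_sub, sub_mul,
    mul_assoc, mul_nonsing_inv _ hB, nonsing_inv_mul _ hA, mul_one, one_mul, smul_sub]
  abel

theorem Matrix.IsSkewAdjoint.qnorm_cayley_sub_cayley_mulVec_le (hQ : Q.PosDef)
    (hA : Q.IsSkewAdjoint A) (hB : Q.IsSkewAdjoint B) (y : Fin n → ℝ) :
    qnorm Q ((cayley A - cayley B) *ᵥ y) ≤ 2 * qOpNorm Q (A - B) * qnorm Q y := by
  rw [cayley_sub_cayley (hA.isUnit_det_one_sub hQ) (hB.isUnit_det_one_sub hQ), ← mulVec_mulVec,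
    ← mulVec_mulVec]
  calc _ ≤ qnorm Q (((2 : ℝ) • (A - B)) *ᵥ ((1 - B)⁻¹ *ᵥ y)) :=
        hA.qnorm_inv_one_sub_mulVec_le hQ _
    _ ≤ qOpNorm Q ((2 : ℝ) • (A - B)) * qnorm Q ((1 - B)⁻¹ *ᵥ y) := qnorm_mulVec_le hQ _ _
    _ ≤ qOpNorm Q ((2 : ℝ) • (A - B)) * qnorm Q y :=
        mul_le_mul_of_nonneg_left (hB.qnorm_inv_one_sub_mulVec_le hQ y)
          (QVec.norm_mulVecL hQ _ ▸ norm_nonneg _)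
    _ = 2 * qOpNorm Q (A - B) * qnorm Q y := by rw [qOpNorm_smul hQ, abs_two]

end Cayley

section Phi

variable {n : ℕ} {Q : Matrix (Fin n) (Fin n) ℝ} {J : (Fin n → ℝ) → Matrix (Fin n) (Fin n) ℝ}
  {y₀ : Fin n → ℝ} {h : ℝ}

theorem qnorm_Phi (hQ : Q.PosDef) (hJ : ∀ z, (J z)ᵀ = -J z) (x : Fin n → ℝ) :
    qnorm Q (Phi Q J y₀ h x) = qnorm Q y₀ :=
  (hQ.isSymm.isSkewAdjoint_smul_mul (hJ _) _).qnorm_cayley_mulVec hQ y₀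

theorem qnorm_Phi_sub_le (hQ : Q.PosDef) (hJ : ∀ z, (J z)ᵀ = -J z) (x : Fin n → ℝ) :
    qnorm Q (Phi Q J y₀ h x - y₀) ≤ 2 * qnorm Q y₀ :=
  (qnorm_sub_le hQ _ _).trans_eq (by rw [qnorm_Phi hQ hJ, two_mul])

theorem qnorm_Phi_sub_Phi_le (hQ : Q.PosDef) (hJ : ∀ z, (J z)ᵀ = -J z) {L : ℝ}
    (hLip : ∀ z z' : Fin n → ℝ,
      qnorm Q (z - y₀) ≤ 2 * qnorm Q y₀ → qnorm Q (z' - y₀) ≤ 2 * qnorm Q y₀ →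
      qOpNorm Q (J z * Q - J z' * Q) ≤ L * qnorm Q (z - z'))
    (hh : 0 ≤ h) {x x' : Fin n → ℝ} (hx : qnorm Q (x - y₀) ≤ 2 * qnorm Q y₀)
    (hx' : qnorm Q (x' - y₀) ≤ 2 * qnorm Q y₀) :
    qnorm Q (Phi Q J y₀ h x - Phi Q J y₀ h x') ≤ h * L * qnorm Q y₀ / 2 * qnorm Q (x - x') := by
  have hmid : ∀ u, qnorm Q (u - y₀) ≤ 2 * qnorm Q y₀ →
      qnorm Q ((1 / 2 : ℝ) • (y₀ + u) - y₀) ≤ 2 * qnorm Q y₀ := fun u hu => by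
    rw [show (1 / 2 : ℝ) • (y₀ + u) - y₀ = (1 / 2 : ℝ) • (u - y₀) by module, qnorm_smul hQ,
      abs_of_pos one_half_pos]
    linarith [qnorm_nonneg Q y₀, qnorm_nonneg Q (u - y₀)]
  have hskew : ∀ z, Q.IsSkewAdjoint ((h / 2) • (J z * Q)) :=
    fun z => hQ.isSymm.isSkewAdjoint_smul_mul (hJ z) _
  have hLip' := hLip _ _ (hmid x hx) (hmid x' hx')
  rw [show (1 / 2 : ℝ) • (y₀ + x) - (1 / 2 : ℝ) • (y₀ + x') = (1 / 2 : ℝ) • (x - x') by module,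
    qnorm_smul hQ, abs_of_pos one_half_pos] at hLip'
  calc qnorm Q (Phi Q J y₀ h x - Phi Q J y₀ h x')
      ≤ 2 * qOpNorm Q ((h / 2) • (J ((1 / 2 : ℝ) • (y₀ + x)) * Q)
          - (h / 2) • (J ((1 / 2 : ℝ) • (y₀ + x')) * Q)) * qnorm Q y₀ := by
        rw [Phi, Phi, ← sub_mulVec]
        exact (hskew _).qnorm_cayley_sub_cayley_mulVec_le hQ (hskew _) y₀
    _ = h * qOpNorm Q (J ((1 / 2 : ℝ) • (y₀ + x)) * Q - J ((1 / 2 : ℝ) • (y₀ + x')) * Q)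
          * qnorm Q y₀ := by
        rw [← smul_sub, qOpNorm_smul hQ, abs_of_nonneg (by positivity)]
        ring
    _ ≤ h * (L * (1 / 2 * qnorm Q (x - x'))) * qnorm Q y₀ := by
        have := qnorm_nonneg Q y₀
        gcongr
    _ = h * L * qnorm Q y₀ / 2 * qnorm Q (x - x') := by ring

end Phi

theorem stmt18_general {n : ℕ} (Q : Matrix (Fin n) (Fin n) ℝ) (hQ : Q.PosDef)
    (J : (Fin n → ℝ) → Matrix (Fin n) (Fin n) ℝ) (hJ : ∀ z, (J z)ᵀ = -(J z))
    (y₀ : Fin n → ℝ) (L : ℝ)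
    (hLip : ∀ z z' : Fin n → ℝ,
      qnorm Q (z - y₀) ≤ 2 * qnorm Q y₀ → qnorm Q (z' - y₀) ≤ 2 * qnorm Q y₀ →
      qOpNorm Q (J z * Q - J z' * Q) ≤ L * qnorm Q (z - z'))
    (h : ℝ) (hh : 0 < h) (hsmall : h * L * qnorm Q y₀ < 2) :
    ∃ y : Fin n → ℝ,
      (qnorm Q (y - y₀) ≤ 2 * qnorm Q y₀ ∧ Phi Q J y₀ h y = y) ∧
      (∀ y' : Fin n → ℝ, qnorm Q (y' - y₀) ≤ 2 * qnorm Q y₀ →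
        Phi Q J y₀ h y' = y' → y' = y) ∧
      (∀ x₀ : Fin n → ℝ,
        Filter.Tendsto (fun k => (Phi Q J y₀ h)^[k] x₀) Filter.atTop (nhds y)) :=
  exists_fixedPoint_tendsto_of_qnorm_contraction hQ (by linarith) (qnorm_Phi_sub_le hQ hJ)
    fun _ _ => qnorm_Phi_sub_Phi_le hQ hJ hLip hh.le

/-- If `h·L·‖y₀‖_Q < 2` (i.e. `h < 2/(L‖y₀‖_Q)`), the fixed-point iteration
`x_{k+1} = Φ_h(x_k)` converges, for every starting vector `x₀`, to the unique
fixed point of `Φ_h` in the ball `B(y₀; 2‖y₀‖_Q)`. -/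
theorem stmt18 {n : ℕ} (Q : Matrix (Fin n) (Fin n) ℝ) (hQ : Q.PosDef)
    (J : (Fin n → ℝ) → Matrix (Fin n) (Fin n) ℝ) (hJ : ∀ z, (J z)ᵀ = -(J z))
    (y₀ : Fin n → ℝ) (L : ℝ) (hL : 0 ≤ L)
    (hLip : ∀ z z' : Fin n → ℝ,
      qnorm Q (z - y₀) ≤ 2 * qnorm Q y₀ → qnorm Q (z' - y₀) ≤ 2 * qnorm Q y₀ →
      qOpNorm Q (J z * Q - J z' * Q) ≤ L * qnorm Q (z - z'))
    (h : ℝ) (hh : 0 < h) (hsmall : h * L * qnorm Q y₀ < 2) :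
    ∃ y : Fin n → ℝ,
      (qnorm Q (y - y₀) ≤ 2 * qnorm Q y₀ ∧ Phi Q J y₀ h y = y) ∧
      (∀ y' : Fin n → ℝ, qnorm Q (y' - y₀) ≤ 2 * qnorm Q y₀ →
        Phi Q J y₀ h y' = y' → y' = y) ∧
      (∀ x₀ : Fin n → ℝ,
        Filter.Tendsto (fun k => (Phi Q J y₀ h)^[k] x₀) Filter.atTop (nhds y)) :=
  stmt18_general Q hQ J hJ y₀ L hLip h hh hsmall
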